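/- For the two-loops quiver over ℂ: for every n ≥ 1 and every path γ ∈ Q_n, [H,(γ,a)]_Q = (v(γ) − 1)·(γ,a) and [H,(γ,b)]_Q = (v(γ) + 1)·(γ,b); and for every n ≥ 1 and every path γ ∈ Q_{n−1}, [H, D_{n−1}(γ,e)]_Q = v(γ)·D_{n−1}(γ,e). -/

import Mathlib

/-! Two-loops quiver base: one vertex `e`, two loops `a`, `b`.

`Q_n` is the set of words of length `n` in `{a, b}` (all paths are parallel, since
there is a single vertex), and `ℂ(Q_n ∥ Q_1)` is the complex vector space with basis
`Q_n ∥ Q_1 = Q_n × Q_1`. -/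

namespace TwoLoops

/-- The two arrows (loops) of the quiver. -/
inductive TL : Type
  | a : TL
  | b : TL
deriving DecidableEq

instance : Fintype TL := ⟨{TL.a, TL.b}, fun x => by cases x <;> simp⟩

/-- Paths of length `n` in the two-loops quiver: words of length `n` in `{a, b}`. -/
abbrev Wd (n : ℕ) : Type := Fin n → TL

/-- `ℂ(Q_n ∥ Q_1)`: the complex vector space with basis `Q_n ∥ Q_1 = Q_n × Q_1`. -/
abbrev CQ1 (n : ℕ) : Type := (Wd n × TL) → ℂ

/-- `ℂ(Q_n ∥ Q_0)`: basis `Q_n ∥ Q_0 = Q_n` (the unique vertex `e` is omitted). -/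
abbrev CQ0 (n : ℕ) : Type := Wd n → ℂ

/-- The basis element `(γ, x)` of `ℂ(Q_n ∥ Q_1)`. -/
noncomputable def bE {n : ℕ} (γ : Wd n) (x : TL) : CQ1 n := Pi.single (γ, x) (1 : ℂ)

/-- The Gerstenhaber-type bracket `[·,·]_Q` on basis elements, for a degree-one
element `(c,x) ∈ Q_1 ∥ Q_1` against `(γ,y) ∈ Q_n ∥ Q_1`:
`[(c,x),(γ,y)]_Q = δ_{c,y}·(γ,x) − Σ_{i=1}^n δ_{γ_i,x}·(γ ⋄_i c, y)`,
which is the general formula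
`Σ_i (−1)^{(i−1)(m−1)} (α,x)∘_i(β,y) − (−1)^{(n−1)(m−1)} Σ_i (−1)^{(i−1)(n−1)} (β,y)∘_i(α,x)`
specialized to the case where the left argument has degree one (all signs are `+1`;
here `γ ⋄_i c` is the path obtained from `γ` by replacing its `i`-th arrow by `c`). -/
noncomputable def brB {n : ℕ} (P : Wd 1 × TL) (R : Wd n × TL) : CQ1 n :=
  (if P.1 0 = R.2 then bE R.1 P.2 else 0)
    - ∑ i : Fin n,
        (if R.1 i = P.2 then bE (Function.update R.1 i (P.1 0)) R.2 else 0)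

/-- The bracket `[f, ·]_Q` with a degree-one element `f ∈ ℂ(Q_1 ∥ Q_1)`, as a linear
endomorphism of `ℂ(Q_n ∥ Q_1)` (bilinear extension of `brB`). -/
noncomputable def brL {n : ℕ} (f : CQ1 1) : CQ1 n →ₗ[ℂ] CQ1 n :=
  ∑ P : Wd 1 × TL, ∑ R : Wd n × TL,
    f P • ((LinearMap.proj R : CQ1 n →ₗ[ℂ] ℂ).smulRight (brB P R))

/-- `H = (b,b) − (a,a)`. -/
noncomputable def H : CQ1 1 := bE (fun _ => TL.b) TL.b - bE (fun _ => TL.a) TL.a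

/-- `E = (a,b)`. -/
noncomputable def E : CQ1 1 := bE (fun _ => TL.a) TL.b

/-- `F = (b,a)`. -/
noncomputable def F : CQ1 1 := bE (fun _ => TL.b) TL.a

/-- `I = (a,a) + (b,b)`. -/
noncomputable def Iel : CQ1 1 := bE (fun _ => TL.a) TL.a + bE (fun _ => TL.b) TL.b

/-- `D_n` on basis elements: `D_n(γ,e) = (aγ,a) + (bγ,b) + (−1)^{n+1}((γa,a) + (γb,b))`. -/
noncomputable def DB (n : ℕ) (γ : Wd n) : CQ1 (n + 1) :=
  bE (Fin.cons TL.a γ) TL.a + bE (Fin.cons TL.b γ) TL.b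
    + ((-1 : ℂ) ^ (n + 1)) • (bE (Fin.snoc γ TL.a) TL.a + bE (Fin.snoc γ TL.b) TL.b)

/-- The linear map `D_n : ℂ(Q_n ∥ Q_0) → ℂ(Q_{n+1} ∥ Q_1)`. -/
noncomputable def Dmap (n : ℕ) : CQ0 n →ₗ[ℂ] CQ1 (n + 1) :=
  ∑ γ : Wd n, (LinearMap.proj γ : CQ0 n →ₗ[ℂ] ℂ).smulRight (DB n γ)

/-- `a(γ)`: the number of occurrences of the arrow `a` in the path `γ`. -/
def ca {n : ℕ} (γ : Wd n) : ℕ := (Finset.univ.filter fun i => γ i = TL.a).card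

/-- `b(γ)`: the number of occurrences of the arrow `b` in the path `γ`. -/
def cb {n : ℕ} (γ : Wd n) : ℕ := (Finset.univ.filter fun i => γ i = TL.b).card

/-- `v(γ) = a(γ) − b(γ)`. -/
def vv {n : ℕ} (γ : Wd n) : ℤ := (ca γ : ℤ) - (cb γ : ℤ)

/-! Bracketing with `H` acts diagonally on the basis: a path `γ` carries the weight `v(γ)`,
counting `+1` for each `a` and `-1` for each `b`, and `[H, (γ, x)]_Q` multiplies `(γ, x)` by
`v(γ) - v(x)`. Each of the four summands of `D_n(γ, e)` prepends or appends to `γ` the same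
arrow `x` that it records, so all of them have eigenvalue `v(γ)`. -/

def TL.weight : TL → ℤ
  | TL.a => 1
  | TL.b => -1

lemma vv_eq_sum_weight {n : ℕ} (γ : Wd n) : vv γ = ∑ i, (γ i).weight := by
  rw [vv, ca, cb, Finset.card_filter, Finset.card_filter]
  push_cast
  rw [← Finset.sum_sub_distrib]
  exact Finset.sum_congr rfl fun i _ => by cases γ i <;> rfl

lemma vv_cons {n : ℕ} (x : TL) (γ : Wd n) : vv (Fin.cons x γ : Wd (n + 1)) = x.weight + vv γ := by
  simp [vv_eq_sum_weight, Fin.sum_univ_succ]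

lemma vv_snoc {n : ℕ} (γ : Wd n) (x : TL) : vv (Fin.snoc γ x : Wd (n + 1)) = vv γ + x.weight := by
  simp [vv_eq_sum_weight, Fin.sum_univ_castSucc]

lemma brL_sub_apply {n : ℕ} (f g : CQ1 1) (v : CQ1 n) : brL (f - g) v = brL f v - brL g v := by
  simp only [brL, LinearMap.sum_apply, LinearMap.smul_apply, Pi.sub_apply, sub_smul,
    Finset.sum_sub_distrib]

lemma brL_bE_bE {n : ℕ} (c : Wd 1) (y : TL) (γ : Wd n) (x : TL) :
    brL (bE c y) (bE γ x) = brB (c, y) (γ, x) := by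
  simp [brL, bE, Pi.single_apply, ite_smul, Finset.sum_ite_eq']

/-- Replacing an occurrence of the loop `c` by `c` itself does not change the path, so the
sum in `brB` collapses to a count. -/
lemma brB_loop_self {n : ℕ} (c : TL) (γ : Wd n) (x : TL) :
    brB ((fun _ => c), c) (γ, x)
      = (if c = x then bE γ c else 0)
        - ((Finset.univ.filter fun i => γ i = c).card : ℂ) • bE γ x := by
  have hterm : ∀ i : Fin n,
      (if γ i = c then bE (Function.update γ i c) x else 0) = if γ i = c then bE γ x else 0 :=
    fun i => by
      split_ifs with h
      · rw [← h, Function.update_eq_self]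
      · rfl
  rw [brB, Finset.sum_congr rfl fun i _ => hterm i, ← Finset.sum_filter, Finset.sum_const,
    ← Nat.cast_smul_eq_nsmul ℂ]

lemma brL_H_bE {n : ℕ} (γ : Wd n) (x : TL) :
    brL H (bE γ x) = ((vv γ - x.weight : ℤ) : ℂ) • bE γ x := by
  rw [H, brL_sub_apply, brL_bE_bE, brL_bE_bE, brB_loop_self, brB_loop_self, vv, ca, cb]
  cases x <;> simp only [TL.weight, if_pos, reduceCtorEq] <;> push_cast <;> module

lemma brL_H_bE_cons {n : ℕ} (x : TL) (γ : Wd n) :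
    brL H (bE (Fin.cons x γ) x) = (vv γ : ℂ) • bE (Fin.cons x γ : Wd (n + 1)) x := by
  rw [brL_H_bE, vv_cons, add_sub_cancel_left]

lemma brL_H_bE_snoc {n : ℕ} (γ : Wd n) (x : TL) :
    brL H (bE (Fin.snoc γ x) x) = (vv γ : ℂ) • bE (Fin.snoc γ x : Wd (n + 1)) x := by
  rw [brL_H_bE, vv_snoc, add_sub_cancel_right]

lemma Dmap_single {n : ℕ} (γ : Wd n) : Dmap n (Pi.single γ 1) = DB n γ := by
  simp [Dmap, Pi.single_apply, ite_smul, Finset.sum_ite_eq']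

/-- STATEMENT 5: for every `n ≥ 1` and every path `γ ∈ Q_n`,
`[H,(γ,a)]_Q = (v(γ) − 1)·(γ,a)` and `[H,(γ,b)]_Q = (v(γ) + 1)·(γ,b)`;
and for every `n ≥ 1` and every path `γ ∈ Q_{n−1}` (reindexed: for every `n ≥ 0` and
`γ ∈ Q_n`), `[H, D_{n−1}(γ,e)]_Q = v(γ)·D_{n−1}(γ,e)`. -/
theorem stmt5 :
    (∀ n : ℕ, 1 ≤ n → ∀ γ : Wd n,
      brL H (bE γ TL.a) = ((vv γ : ℂ) - 1) • bE γ TL.a ∧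
      brL H (bE γ TL.b) = ((vv γ : ℂ) + 1) • bE γ TL.b) ∧
    (∀ n : ℕ, ∀ γ : Wd n,
      brL H (Dmap n (Pi.single γ (1 : ℂ))) = (vv γ : ℂ) • Dmap n (Pi.single γ (1 : ℂ))) := by
  refine ⟨fun n _ γ => ⟨?_, ?_⟩, fun n γ => ?_⟩
  · simp [brL_H_bE, TL.weight]
  · simp [brL_H_bE, TL.weight]
  · rw [Dmap_single, DB]
    simp only [map_add, map_smul, brL_H_bE_cons, brL_H_bE_snoc, smul_add, smul_comm _ (vv γ : ℂ)]

end TwoLoops
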